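/- arXiv:2010.09011 — 4 statements merged into one kernel-verified Lean document; each statement's English description precedes it below -/
import Mathlib

section
/- For distinct positive reals v_1,...,v_n, det(v_i^j - v_i^{-j})_{i,j=1}^n = (-1)^n · ∏_{i<j}(v_i - v_j) · ∏_{1≤i≤j≤n}(1 - v_i v_j) · ∏_{j=1}^n v_j^{-n}. -/
/-!
Since `x ^ (j + 1) - x⁻¹ ^ (j + 1) = (x - x⁻¹) * S_j (x + x⁻¹)`, where `S_j` is the monic
(rescaled) Chebyshev polynomial of the second kind of degree `j`, pulling the factor
`v i - (v i)⁻¹` out of each row leaves a Vandermonde determinant in `y i = v i + (v i)⁻¹`.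
Each of its factors splits as
`y j - y i = (v i - v j) * (1 - v i * v j) / (v i * v j)`, and `v - v⁻¹ = -(1 - v * v) / v`
supplies the diagonal factors `1 - v i * v i`; each `v i` ends up in the denominator
exactly `n` times.
-/

open Finset Polynomial Polynomial.Chebyshev

namespace Polynomial.Chebyshev

variable {R : Type*} [CommRing R]

theorem degree_S_natCast [Nontrivial R] (n : ℕ) : (S R n).degree = n := by
  induction n using Nat.twoStepInduction with
  | zero => simp
  | one => simp
  | more n ih₀ ih₁ =>
    push_cast at ih₁ ⊢
    have hlt : (S R n).degree < (X * S R (n + 1)).degree := by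
      rw [mul_comm, degree_mul_X, ih₀, ih₁]; exact_mod_cast (by omega : n < n + 2)
    rw [S_add_two, degree_sub_eq_left_of_degree_lt hlt, mul_comm, degree_mul_X, ih₁]; norm_cast

theorem natDegree_S_natCast [Nontrivial R] (n : ℕ) : (S R n).natDegree = n :=
  natDegree_eq_of_degree_eq_some (degree_S_natCast n)

theorem monic_S_natCast (n : ℕ) : (S R n).Monic := by
  nontriviality R
  induction n using Nat.twoStepInduction with
  | zero => simp
  | one => simp
  | more n _ ih₁ =>
    push_cast at ih₁ ⊢
    rw [S_add_two]
    refine (monic_X.mul ih₁).sub_of_left ?_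
    rw [mul_comm, degree_mul_X, degree_S_natCast, ← Nat.cast_one, ← Nat.cast_add, degree_S_natCast]
    exact_mod_cast (by omega : n < n + 2)

theorem S_eval_add_inv {K : Type*} [Field K] {x : K} (hx : x ≠ 0) (n : ℤ) :
    (x - x⁻¹) * (S K n).eval (x + x⁻¹) = x ^ (n + 1) - x ^ (-(n + 1)) := by
  have hrec (m : ℤ) : x ^ (m + 1) - x ^ (-(m + 1)) =
      (x + x⁻¹) * (x ^ m - x ^ (-m)) - (x ^ (m - 1) - x ^ (-(m - 1))) := by
    simp only [neg_add, sub_eq_add_neg, zpow_add₀ hx, zpow_neg, zpow_one]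
    field_simp
    ring
  induction n using Polynomial.Chebyshev.induct with
  | zero => simp
  | one =>
    simp only [S_one, eval_X, show (1 : ℤ) + 1 = (2 : ℕ) by norm_num, zpow_neg, zpow_natCast]
    ring
  | add_two n ih₁ ih₀ =>
    rw [S_add_two, eval_sub, eval_mul, eval_X]
    linear_combination (norm := ring_nf) (x + x⁻¹) * ih₁ - ih₀ - hrec (n + 2)
  | neg_add_one n ih₀ ih₁ =>
    rw [S_sub_one, eval_sub, eval_mul, eval_X]
    linear_combination (norm := ring_nf) (x + x⁻¹) * ih₀ - ih₁ - hrec (-n + 1)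

end Polynomial.Chebyshev

theorem Matrix.det_zpow_succ_sub_zpow_neg_succ {K : Type*} [Field K] {n : ℕ} (x : Fin n → K)
    (hx : ∀ i, x i ≠ 0) :
    (Matrix.of fun i j : Fin n => x i ^ ((j : ℤ) + 1) - x i ^ (-((j : ℤ) + 1))).det =
      (∏ i, (x i - (x i)⁻¹)) * ∏ i, ∏ j ∈ Ioi i, (x j + (x j)⁻¹ - (x i + (x i)⁻¹)) := by
  have hfactor : (Matrix.of fun i j : Fin n => x i ^ ((j : ℤ) + 1) - x i ^ (-((j : ℤ) + 1))) =
      Matrix.of fun i j => (x i - (x i)⁻¹) *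
        Matrix.of (fun i (j : Fin n) => (S K (j : ℕ)).eval (x i + (x i)⁻¹)) i j := by
    ext i j
    simp [S_eval_add_inv (hx i)]
  rw [hfactor, Matrix.det_mul_column,
    ← Matrix.det_eval_matrixOfPolynomials_eq_det_vandermonde _ (fun j => S K (j : ℕ))
      (fun j => natDegree_S_natCast j) (fun j => monic_S_natCast j), Matrix.det_vandermonde]

theorem Finset.prod_mul_prod_prod_Ioi_mul {α M : Type*} [Fintype α] [LinearOrder α]
    [LocallyFiniteOrderTop α] [LocallyFiniteOrderBot α] [CommMonoid M] (f : α → M) :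
    (∏ i, f i) * ∏ i, ∏ j ∈ Ioi i, f i * f j = ∏ i, f i ^ Fintype.card α := by
  rw [prod_prod_Ioi_mul_eq_prod_prod_off_diag (fun _ i => f i), ← prod_mul_distrib]
  refine prod_congr rfl fun i _ => ?_
  have : 0 < Fintype.card α := Fintype.card_pos_iff.mpr ⟨i⟩
  rw [Finset.prod_const, card_compl, card_singleton, ← pow_succ', Nat.sub_add_cancel this]

theorem sub_inv_eq_neg_one_sub_mul_self_mul_inv {K : Type*} [Field K] {x : K} (hx : x ≠ 0) :
    x - x⁻¹ = -(1 - x * x) * x⁻¹ := by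
  field_simp
  ring

theorem add_inv_sub_add_inv {K : Type*} [Field K] {x y : K} (hx : x ≠ 0) (hy : y ≠ 0) :
    y + y⁻¹ - (x + x⁻¹) = (x - y) * (1 - x * y) * (x⁻¹ * y⁻¹) := by
  field_simp
  ring

theorem stmt0_general (n : ℕ) (v : Fin n → ℝ) (hv : ∀ i, 0 < v i) :
    Matrix.det (Matrix.of fun i j : Fin n =>
        v i ^ ((j : ℤ) + 1) - v i ^ (-((j : ℤ) + 1))) =
      (-1) ^ n * (∏ i : Fin n, ∏ j ∈ Finset.univ.filter (fun j => i < j), (v i - v j)) *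
        (∏ i : Fin n, ∏ j ∈ Finset.univ.filter (fun j => i ≤ j), (1 - v i * v j)) *
        ∏ j : Fin n, v j ^ (-(n : ℤ)) := by
  have hv₀ i : v i ≠ 0 := (hv i).ne'
  have hpow := prod_mul_prod_prod_Ioi_mul fun i => (v i)⁻¹
  rw [Fintype.card_fin] at hpow
  simp_rw [Matrix.det_zpow_succ_sub_zpow_neg_succ v hv₀, filter_lt_eq_Ioi, filter_le_eq_Ici,
    ← mul_prod_Ioi_eq_prod_Ici, sub_inv_eq_neg_one_sub_mul_self_mul_inv (hv₀ _),
    add_inv_sub_add_inv (hv₀ _) (hv₀ _), zpow_neg, zpow_natCast, ← inv_pow,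
    ← hpow]
  simp only [prod_mul_distrib, prod_neg, card_univ, Fintype.card_fin]
  ring

/-- For distinct positive reals `v 1, ..., v n`,
`det (v i ^ j - v i ^ (-j)) = (-1)^n ∏_{i<j} (v i - v j) ∏_{i ≤ j} (1 - v i v j) ∏_j v j ^ (-n)`.
Indices `i j : Fin n` are 0-indexed, so the matrix entry is `v i ^ (j+1) - v i ^ (-(j+1))`. -/
theorem stmt0 (n : ℕ) (v : Fin n → ℝ) (hv : ∀ i, 0 < v i) (hinj : Function.Injective v) :
    Matrix.det (Matrix.of fun i j : Fin n =>
        v i ^ ((j : ℤ) + 1) - v i ^ (-((j : ℤ) + 1))) =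
      (-1) ^ n * (∏ i : Fin n, ∏ j ∈ Finset.univ.filter (fun j => i < j), (v i - v j)) *
        (∏ i : Fin n, ∏ j ∈ Finset.univ.filter (fun j => i ≤ j), (1 - v i * v j)) *
        ∏ j : Fin n, v j ^ (-(n : ℤ)) :=
  stmt0_general n v hv
end

section
/- Harmonicity of h_A: for distinct positive v_1,...,v_n, the function h_A(x) = ∏_{i=1}^n v_{n-i+1}^{-x_i} S_x(v) on W^n = {x ∈ ℤ^n : x_1 ≤ ... ≤ x_n} satisfies Σ_{i=1}^n [ v_{n-i+1} h_A(x + e_i) 1_{x+e_i ∈ W^n} + v_{n-i+1}^{-1} h_A(x - e_i) 1_{x-e_i ∈ W^n} ] = ( Σ_{i=1}^n (v_i + v_i^{-1}) ) h_A(x) for all x ∈ W^n. -/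
/-!
Write `h_A(x) = w(x) S_x(v)` with `w(x) = ∏ v_{n-i+1}^{-x_i}`. The rates `v_{n-i+1}^{±1}` exactly
cancel the change of `w` under `x ↦ x ± e_i`, so the claim reduces to
`Σ_i (S_{x+e_i} + S_{x-e_i}) = Σ_a (v_a + v_a⁻¹) S_x`. Moving `x_i` by `±1` multiplies column `i`
of the alternant `det (v_a ^ (x_b + b))` by `v_a ^ (±1)`; by multilinearity the two terms add up to
the determinant with column `i` replaced by column `i` of `D M`, `D = diag (v + v⁻¹)`, and by
Cramer's rule these determinants sum to `tr D · det M`. The indicators may be dropped: if `x ∈ W^n`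
but `x ± e_i ∉ W^n`, two of the exponents `x_b + b` coincide, so the alternant has two equal
columns and `h_A (x ± e_i) = 0`.
-/

open scoped Classical

/-- The Schur function `S_x(v) = det(v a ^ (x b + b - 1)) / det(v a ^ (b - 1))`
(1-based; here 0-based so the exponents are `x b + b` and `b`). -/
noncomputable def schurS {n : ℕ} (v : Fin n → ℝ) (x : Fin n → ℤ) : ℝ :=
  Matrix.det (Matrix.of fun a b : Fin n => v a ^ (x b + (b : ℤ))) /
    Matrix.det (Matrix.of fun a b : Fin n => v a ^ (b : ℕ))

/-- `h_A(x) = ∏ i, v_{n-i+1} ^ (-x i) * S_x(v)`. -/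
noncomputable def hA {n : ℕ} (v : Fin n → ℝ) (x : Fin n → ℤ) : ℝ :=
  (∏ i : Fin n, v (Fin.rev i) ^ (-x i)) * schurS v x

namespace Matrix

variable {n R : Type*} [Fintype n] [DecidableEq n] [CommRing R]

theorem sum_det_updateCol_mul_col (A M : Matrix n n R) :
    ∑ i, (M.updateCol i fun a => (A * M) a i).det = A.trace * M.det := by
  have hcol : ∀ i, (M.updateCol i fun a => (A * M) a i).det = (M.adjugate * (A * M)) i i := by
    intro i
    rw [← cramer_apply, cramer_eq_adjugate_mulVec]
    rfl
  simp_rw [hcol]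
  change trace (M.adjugate * (A * M)) = _
  rw [trace_mul_comm, Matrix.mul_assoc, mul_adjugate, Matrix.mul_smul, Matrix.mul_one, trace_smul,
    smul_eq_mul, mul_comm]

theorem sum_det_updateCol_diagonal_mul (d : n → R) (M : Matrix n n R) :
    ∑ i, (M.updateCol i fun a => d a * M a i).det = (∑ a, d a) * M.det := by
  simpa [diagonal_mul, trace_diagonal] using sum_det_updateCol_mul_col (diagonal d) M

end Matrix

open Matrix

section Schur

variable {n : ℕ} (v : Fin n → ℝ)

noncomputable def alternant (x : Fin n → ℤ) : Matrix (Fin n) (Fin n) ℝ :=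
  of fun a b => v a ^ (x b + (b : ℤ))

theorem schurS_eq_det_alternant_div (x : Fin n → ℤ) :
    schurS v x = (alternant v x).det / (vandermonde v).det :=
  rfl

theorem schurS_eq_zero_of_add_eq {x : Fin n → ℤ} {a b : Fin n} (hab : a ≠ b)
    (h : x a + a = x b + b) : schurS v x = 0 := by
  rw [schurS_eq_det_alternant_div, det_zero_of_column_eq hab fun c => by simp [alternant, h],
    zero_div]

variable {v}

theorem alternant_add_single (hv : ∀ a, v a ≠ 0) (x : Fin n → ℤ) (i : Fin n) (s : ℤ) :
    alternant v (x + Pi.single i s) =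
      (alternant v x).updateCol i fun a => v a ^ s * alternant v x a i := by
  ext a b
  rcases eq_or_ne b i with rfl | hb
  · simp [alternant, ← zpow_add₀ (hv a)]
    ring_nf
  · simp [alternant, hb]

theorem sum_schurS_add_single_add_sub_single (hv : ∀ a, v a ≠ 0) (x : Fin n → ℤ) :
    ∑ i, (schurS v (x + Pi.single i 1) + schurS v (x - Pi.single i 1)) =
      (∑ a, (v a + (v a)⁻¹)) * schurS v x := by
  have hdet : ∀ i, (alternant v (x + Pi.single i 1)).det + (alternant v (x - Pi.single i 1)).det =
      ((alternant v x).updateCol i fun a => (v a + (v a)⁻¹) * alternant v x a i).det := by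
    intro i
    rw [sub_eq_add_neg, ← Pi.single_neg, alternant_add_single hv, alternant_add_single hv,
      ← det_updateCol_add]
    congr 2
    ext a
    simp [add_mul]
  simp only [schurS_eq_det_alternant_div, ← add_div, hdet, ← Finset.sum_div,
    sum_det_updateCol_diagonal_mul, mul_div_assoc]

end Schur

section WeylChamber

variable {n : ℕ} {x : Fin n → ℤ}

theorem exists_succ_eq_of_not_monotone_add_single (hx : Monotone x) {i : Fin n}
    (h : ¬Monotone (x + Pi.single i 1)) : ∃ j : Fin n, (j : ℕ) = i + 1 ∧ x j = x i := by
  simp only [Monotone, not_forall, not_le] at h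
  obtain ⟨a, b, hab, hlt⟩ := h
  obtain rfl : a = i := by
    by_contra hai
    have := hx hab
    rcases eq_or_ne b i with rfl | hbi <;> simp_all <;> omega
  have hne : a ≠ b := by rintro rfl; simp at hlt
  have hxb : x b ≤ x a := by simpa [hne.symm] using hlt
  have hab : (a : ℕ) < b := Fin.lt_def.1 (lt_of_le_of_ne hab hne)
  refine ⟨⟨a + 1, by omega⟩, rfl, le_antisymm ((hx ?_).trans hxb) (hx ?_)⟩ <;>
    simp only [Fin.le_def] <;> omega

theorem exists_pred_eq_of_not_monotone_sub_single (hx : Monotone x) {i : Fin n}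
    (h : ¬Monotone (x - Pi.single i 1)) : ∃ j : Fin n, (j : ℕ) + 1 = i ∧ x j = x i := by
  simp only [Monotone, not_forall, not_le] at h
  obtain ⟨a, b, hab, hlt⟩ := h
  obtain rfl : b = i := by
    by_contra hbi
    have := hx hab
    rcases eq_or_ne a i with rfl | hai <;> simp_all <;> omega
  have hne : a ≠ b := by rintro rfl; simp at hlt
  have hxb : x b ≤ x a := by simpa [hne] using hlt
  have hab : (a : ℕ) < b := Fin.lt_def.1 (lt_of_le_of_ne hab hne)
  refine ⟨⟨b - 1, by omega⟩, by simp; omega, le_antisymm (hx ?_) (hxb.trans (hx ?_))⟩ <;>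
    simp only [Fin.le_def] <;> omega

end WeylChamber

section Harmonic

variable {n : ℕ} {v : Fin n → ℝ}

theorem zpow_mul_hA_add_single (hv : ∀ a, v a ≠ 0) (x : Fin n → ℤ) (i : Fin n) (s : ℤ) :
    v (Fin.rev i) ^ s * hA v (x + Pi.single i s) =
      (∏ j, v (Fin.rev j) ^ (-x j)) * schurS v (x + Pi.single i s) := by
  have hprod : ∏ j, v (Fin.rev j) ^ (-(x + Pi.single i s : Fin n → ℤ) j) =
      (∏ j, v (Fin.rev j) ^ (-x j)) * v (Fin.rev i) ^ (-s) := by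
    have hsplit : ∀ j, v (Fin.rev j) ^ (-(x + Pi.single i s : Fin n → ℤ) j) =
        v (Fin.rev j) ^ (-x j) * v (Fin.rev j) ^ (-(Pi.single i s : Fin n → ℤ) j) := fun j => by
      rw [Pi.add_apply, neg_add, zpow_add₀ (hv _)]
    rw [Finset.prod_congr rfl fun j _ => hsplit j, Finset.prod_mul_distrib]
    congr 1
    rw [Finset.prod_eq_single i (fun j _ hj => by simp [hj]) (by simp), Pi.single_eq_same]
  rw [hA, hprod, _root_.zpow_neg]
  field_simp [zpow_ne_zero s (hv (Fin.rev i))]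

variable (v)

theorem hA_eq_zero_of_add_eq {x : Fin n → ℤ} {a b : Fin n} (hab : a ≠ b)
    (h : x a + a = x b + b) : hA v x = 0 := by
  rw [hA, schurS_eq_zero_of_add_eq v hab h, mul_zero]

theorem hA_add_single_eq_zero_of_not_monotone {x : Fin n → ℤ} (hx : Monotone x) {i : Fin n}
    (h : ¬Monotone (x + Pi.single i 1)) :
    hA v (x + Pi.single i 1) = 0 := by
  obtain ⟨j, hj, hxj⟩ := exists_succ_eq_of_not_monotone_add_single hx h
  have hij : i ≠ j := fun hij => by omega
  exact hA_eq_zero_of_add_eq v hij (by simp [hij.symm, hxj, hj]; ring)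

theorem hA_sub_single_eq_zero_of_not_monotone {x : Fin n → ℤ} (hx : Monotone x) {i : Fin n}
    (h : ¬Monotone (x - Pi.single i 1)) :
    hA v (x - Pi.single i 1) = 0 := by
  obtain ⟨j, hj, hxj⟩ := exists_pred_eq_of_not_monotone_sub_single hx h
  have hij : i ≠ j := fun hij => by omega
  exact hA_eq_zero_of_add_eq v hij (by simp [hij.symm, hxj, ← hj])

end Harmonic

theorem stmt12_general (n : ℕ) (v : Fin n → ℝ) (hv : ∀ i, 0 < v i)
    (x : Fin n → ℤ) (hx : Monotone x) :
    (∑ i : Fin n,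
        (v (Fin.rev i) * (if Monotone (x + Pi.single i 1) then hA v (x + Pi.single i 1) else 0) +
          (v (Fin.rev i))⁻¹ *
            (if Monotone (x - Pi.single i 1) then hA v (x - Pi.single i 1) else 0))) =
      (∑ i : Fin n, (v i + (v i)⁻¹)) * hA v x := by
  have hv₀ : ∀ i, v i ≠ 0 := fun i => (hv i).ne'
  have hup (i : Fin n) :
      (if Monotone (x + Pi.single i 1) then hA v (x + Pi.single i 1) else 0) =
        hA v (x + Pi.single i 1) :=
    ite_eq_left_iff.2 fun h => (hA_add_single_eq_zero_of_not_monotone v hx h).symm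
  have hdown (i : Fin n) :
      (if Monotone (x - Pi.single i 1) then hA v (x - Pi.single i 1) else 0) =
        hA v (x - Pi.single i 1) :=
    ite_eq_left_iff.2 fun h => (hA_sub_single_eq_zero_of_not_monotone v hx h).symm
  have hstep (i : Fin n) :
      v (Fin.rev i) * hA v (x + Pi.single i 1) + (v (Fin.rev i))⁻¹ * hA v (x - Pi.single i 1) =
        (∏ j, v (Fin.rev j) ^ (-x j)) *
          (schurS v (x + Pi.single i 1) + schurS v (x - Pi.single i 1)) := by
    have hplus := zpow_mul_hA_add_single hv₀ x i 1
    have hminus := zpow_mul_hA_add_single hv₀ x i (-1)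
    rw [zpow_one] at hplus
    rw [_root_.zpow_neg_one, Pi.single_neg, ← sub_eq_add_neg] at hminus
    rw [hplus, hminus, mul_add]
  simp only [hup, hdown, hstep]
  rw [← Finset.mul_sum, sum_schurS_add_single_add_sub_single hv₀, hA]
  ring

/-- Harmonicity of `h_A` for the independent walk (component `i` jumping right at rate
`v_{n-i+1}` and left at rate `v_{n-i+1}⁻¹`) killed on leaving the Weyl chamber
`W^n = {x : x 1 ≤ ... ≤ x n}`:
`Σ_i [v_{n-i+1} h_A(x+e_i) 1_{x+e_i ∈ W} + v_{n-i+1}⁻¹ h_A(x-e_i) 1_{x-e_i ∈ W}]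
  = (Σ_i (v i + v i⁻¹)) h_A(x)`. -/
theorem stmt12 (n : ℕ) (v : Fin n → ℝ) (hv : ∀ i, 0 < v i) (hinj : Function.Injective v)
    (x : Fin n → ℤ) (hx : Monotone x) :
    (∑ i : Fin n,
        (v (Fin.rev i) * (if Monotone (x + Pi.single i 1) then hA v (x + Pi.single i 1) else 0) +
          (v (Fin.rev i))⁻¹ *
            (if Monotone (x - Pi.single i 1) then hA v (x - Pi.single i 1) else 0))) =
      (∑ i : Fin n, (v i + (v i)⁻¹)) * hA v x :=
  stmt12_general n v hv x hx
end

section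
/- Column-equality identity for the PushASEP transition kernel: let r_t(x,y) = ∏_{k=1}^n v_k^{y_k - x_k} e^{-t(v_k + 1/v_k)} det(F_{ij}(t; x_i+i-1, y_j+j-1))_{i,j=1}^n where F_{ij}(t; a, b) = D_{y_j}^{(1/v_1,...,1/v_j)} J_{x_i}^{(v_1,...,v_i)} ψ_t(a, b). Then for any y ∈ ℤ^n with y_j = y_{j+1} for some 1 ≤ j ≤ n-1, one has v_j^{-1} r_t(x, y + e_j) = v_{j+1}^{-1} r_t(x, y) for all x ∈ ℤ^n and t ≥ 0. -/
/-- Modified Bessel function of integer order `k ≥ 0` at `2t`. -/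
noncomputable def besselI2 (k : ℕ) (t : ℝ) : ℝ :=
  ∑' m : ℕ, t ^ (2 * m + k) / ((m.factorial : ℝ) * ((m + k).factorial : ℝ))

/-- `ψ_t(x,y) = I_{y-x}(2t) - I_{x+y+2}(2t)` (`I_{-k} = I_k`). -/
noncomputable def psi (t : ℝ) (x y : ℤ) : ℝ :=
  besselI2 (y - x).natAbs t - besselI2 (x + y + 2).natAbs t

/-- `(D^{(a)} f)(u) = f u - a * f (u-1)`. -/
noncomputable def Dop (a : ℝ) (f : ℤ → ℝ) : ℤ → ℝ := fun u => f u - a * f (u - 1)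

/-- `(J^{(a)} f)(u) = Σ_{j=u}^∞ a^(u-j) f j`. -/
noncomputable def Jop (a : ℝ) (f : ℤ → ℝ) : ℤ → ℝ := fun u => ∑' m : ℕ, a ^ (-(m : ℤ)) * f (u + m)

/-- Concatenated `D` operators. -/
noncomputable def DIter (l : List ℝ) (f : ℤ → ℝ) : ℤ → ℝ := l.foldr Dop f

/-- Concatenated `J` operators. -/
noncomputable def JIter (l : List ℝ) (f : ℤ → ℝ) : ℤ → ℝ := l.foldr Jop f

/-- The PushASEP-with-a-wall transition kernel
`r_t(x,y) = ∏_k v_k^(y_k - x_k) e^{-t(v_k + 1/v_k)}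
  · det(D_{y_j}^{(1/v_1,...,1/v_j)} J_{x_i}^{(v_1,...,v_i)} ψ_t(x_i + i - 1, y_j + j - 1))`
(0-based indices below; `v k` stands for `v_{k+1}`). -/
noncomputable def rker (n : ℕ) (v : ℕ → ℝ) (t : ℝ) (x y : Fin n → ℤ) : ℝ :=
  (∏ k : Fin n, v k ^ (y k - x k) * Real.exp (-t * (v k + (v k)⁻¹))) *
    Matrix.det (Matrix.of fun i j : Fin n =>
      DIter ((List.range ((j : ℕ) + 1)).map fun k => (v k)⁻¹)
        (fun w => JIter ((List.range ((i : ℕ) + 1)).map v)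
          (fun u => psi t u w) (x i + ((i : ℕ) : ℤ)))
        (y j + ((j : ℕ) : ℤ)))

/-!
Since the `D` operators commute, column `j + 1` of the determinant is column `j` with
`D^{(1/v_{j+1})}` applied last. Hence when `y_j = y_{j+1}`, column `j + 1` equals
(column `j` at `y + e_j`) `- v_{j+1}⁻¹ ·` (column `j` at `y`). Subtracting it from column `j` of
the matrix at `y + e_j` shows that the determinant at `y + e_j` is `v_{j+1}⁻¹` times the one
at `y`, while the prefactor gains exactly one factor `v_j`.
-/

lemma Dop_comm (a b : ℝ) (f : ℤ → ℝ) : Dop a (Dop b f) = Dop b (Dop a f) := by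
  funext u; simp only [Dop]; ring

lemma DIter_Dop (l : List ℝ) (a : ℝ) (f : ℤ → ℝ) :
    DIter l (Dop a f) = Dop a (DIter l f) := by
  induction l with
  | nil => rfl
  | cons b l ih => exact (congrArg (Dop b) ih).trans (Dop_comm b a _)

lemma DIter_map_range_succ (g : ℕ → ℝ) (m : ℕ) (f : ℤ → ℝ) :
    DIter ((List.range (m + 1)).map g) f = Dop (g m) (DIter ((List.range m).map g) f) := by
  rw [List.range_succ, List.map_append, DIter, List.foldr_append]
  exact DIter_Dop _ _ _

lemma Matrix.det_eq_mul_det_updateCol_of_col_eq_sub_mul {R ι : Type*} [CommRing R]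
    [Fintype ι] [DecidableEq ι] (M : Matrix ι ι R) {j j' : ι} (hjj' : j ≠ j') (a : R)
    (q : ι → R) (hM : ∀ k, M k j' = M k j - a * q k) :
    M.det = a * (M.updateCol j q).det := by
  have hcol : (fun k => M k j + (-1 : R) • M k j') = a • q := by
    funext k; simp only [hM, Pi.smul_apply, smul_eq_mul]; ring
  rw [← det_updateCol_add_smul_self M hjj' (-1), hcol, det_updateCol_smul]

section Kernel

variable {n : ℕ} (v : ℕ → ℝ) (t : ℝ) (x : Fin n → ℤ)

noncomputable def rkerWeight (y : Fin n → ℤ) : ℝ :=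
  ∏ k : Fin n, v k ^ (y k - x k) * Real.exp (-t * (v k + (v k)⁻¹))

noncomputable def rkerMatrix (y : Fin n → ℤ) : Matrix (Fin n) (Fin n) ℝ :=
  Matrix.of fun i j : Fin n =>
    DIter ((List.range ((j : ℕ) + 1)).map fun k => (v k)⁻¹)
      (fun w => JIter ((List.range ((i : ℕ) + 1)).map v)
        (fun u => psi t u w) (x i + ((i : ℕ) : ℤ)))
      (y j + ((j : ℕ) : ℤ))

lemma rker_eq_rkerWeight_mul_det (y : Fin n → ℤ) :
    rker n v t x y = rkerWeight v t x y * (rkerMatrix v t x y).det := rfl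

lemma rkerWeight_add_single (y : Fin n → ℤ) {j : Fin n} (hj : v j ≠ 0) :
    rkerWeight v t x (y + Pi.single j 1) = v j * rkerWeight v t x y := by
  have hrest : ∀ k ∈ ({j}ᶜ : Finset (Fin n)), (y + Pi.single j 1 : Fin n → ℤ) k = y k :=
    fun k hk => by simp [Pi.single_eq_of_ne (by simpa using hk : k ≠ j)]
  rw [rkerWeight, rkerWeight, Fintype.prod_eq_mul_prod_compl j,
    Fintype.prod_eq_mul_prod_compl j, Finset.prod_congr rfl fun k hk => by rw [hrest k hk]]
  simp only [Pi.add_apply, Pi.single_eq_same, add_sub_right_comm, zpow_add_one₀ hj]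
  ring

lemma rkerMatrix_eq_updateCol {y y' : Fin n → ℤ} {j : Fin n} (h : ∀ k ≠ j, y' k = y k) :
    rkerMatrix v t x y' = (rkerMatrix v t x y).updateCol j fun i => rkerMatrix v t x y' i j := by
  ext i k
  rcases eq_or_ne k j with rfl | hk
  · simp
  · simp [Matrix.updateCol_ne hk, rkerMatrix, h k hk]

lemma rkerMatrix_col_succ (y : Fin n → ℤ) {j : Fin n} (hj : (j : ℕ) + 1 < n)
    (hy : y j = y ⟨(j : ℕ) + 1, hj⟩) (i : Fin n) :
    rkerMatrix v t x y i ⟨(j : ℕ) + 1, hj⟩ =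
      rkerMatrix v t x (y + Pi.single j 1) i j -
        (v ((j : ℕ) + 1))⁻¹ * rkerMatrix v t x y i j := by
  simp only [rkerMatrix, Matrix.of_apply, DIter_map_range_succ _ ((j : ℕ) + 1), Dop,
    Pi.add_apply, Pi.single_eq_same, ← hy]
  rw [show y j + ((j + 1 : ℕ) : ℤ) = y j + 1 + j by push_cast; ring, add_right_comm,
    add_sub_cancel_right]

lemma det_rkerMatrix_add_single (y : Fin n → ℤ) {j : Fin n} (hj : (j : ℕ) + 1 < n)
    (hy : y j = y ⟨(j : ℕ) + 1, hj⟩) :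
    (rkerMatrix v t x (y + Pi.single j 1)).det =
      (v ((j : ℕ) + 1))⁻¹ * (rkerMatrix v t x y).det := by
  have hjj' : j ≠ ⟨(j : ℕ) + 1, hj⟩ := fun h => by simpa using congrArg Fin.val h
  have hagree : ∀ k ≠ j, y k = (y + Pi.single j 1 : Fin n → ℤ) k := fun k hk => by
    simp [Pi.single_eq_of_ne hk]
  rw [rkerMatrix_eq_updateCol v t x hagree]
  refine Matrix.det_eq_mul_det_updateCol_of_col_eq_sub_mul _ hjj' _ _ fun i => ?_
  rw [← rkerMatrix_col_succ v t x y hj hy, rkerMatrix_eq_updateCol v t x (j := j) hagree,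
    Matrix.updateCol_ne hjj'.symm]

end Kernel

theorem stmt16_general (n : ℕ) (v : ℕ → ℝ) (hv : ∀ k < n, 0 < v k) (t : ℝ)
    (x y : Fin n → ℤ) (j : Fin n) (hj : (j : ℕ) + 1 < n)
    (hy : y j = y ⟨(j : ℕ) + 1, hj⟩) :
    (v (j : ℕ))⁻¹ * rker n v t x (y + Pi.single j 1) =
      (v ((j : ℕ) + 1))⁻¹ * rker n v t x y := by
  have hvj : v j ≠ 0 := (hv j j.isLt).ne'
  rw [rker_eq_rkerWeight_mul_det, rker_eq_rkerWeight_mul_det, rkerWeight_add_single v t x y hvj,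
    det_rkerMatrix_add_single v t x y hj hy, mul_assoc (v j), inv_mul_cancel_left₀ hvj]
  ring

/-- Column-equality identity: if `y j = y (j+1)` then
`v_j⁻¹ r_t(x, y + e_j) = v_{j+1}⁻¹ r_t(x, y)`. -/
theorem stmt16 (n : ℕ) (v : ℕ → ℝ) (hv : ∀ k < n, 0 < v k) (t : ℝ) (ht : 0 ≤ t)
    (x y : Fin n → ℤ) (j : Fin n) (hj : (j : ℕ) + 1 < n)
    (hy : y j = y ⟨(j : ℕ) + 1, hj⟩) :
    (v (j : ℕ))⁻¹ * rker n v t x (y + Pi.single j 1) =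
      (v ((j : ℕ) + 1))⁻¹ * rker n v t x y :=
  stmt16_general n v hv t x y j hj hy
end

section
/- Detailed-balance-type verification for the dynamically reversible array: let S = {(i,j) : i,j ≥ 1, i+j ≤ n+1}, let 𝒳 = {(x_{ij})_{(i,j)∈S} : x_{ij} ∈ ℤ_{≥0}, x_{i+1,j} ≤ x_{ij}, x_{i,j+1} ≤ x_{ij}}, and define π(x) = ∏_{i+j<n+1} (1 - v_i v_{n-j+1})(v_i v_{n-j+1})^{x_{ij} - max(x_{i+1,j}, x_{i,j+1})} · ∏_{i=1}^n (1 - v_i^2) v_i^{2 x_{i,n-i+1}} for 0 < v_1,...,v_n < 1. Then π is a probability mass function on 𝒳: π(x) > 0 for all x ∈ 𝒳 and Σ_{x ∈ 𝒳} π(x) = 1. -/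
/-!
Under `x ↦ (x_{ij} - max(x_{i+1,j}, x_{i,j+1}))` the configurations in `𝒳` correspond
bijectively to arbitrary arrays `g : S → ℕ`: the inverse is the last passage recursion
`G(i,j) = max(G(i+1,j), G(i,j+1)) + g_{ij}`, with `G = 0` beyond the anti-diagonal. Since `x`
vanishes beyond the anti-diagonal, the diagonal factor `(1 - v_i²) v_i^{2 x_{i,n-i+1}}` is the
off-diagonal factor at `(i, n-i+1)`, so `π` becomes a product over `S` of geometric weights
`(1 - q_{ij}) q_{ij}^{g_{ij}}` with `q_{ij} = v_i v_{n-j+1} ∈ (0,1)`. Such a product is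
positive, and its sum over all arrays `g` factors into a product of geometric series, each
equal to `1`.
-/

/-- The probability mass function of the field of point-to-line last passage times:
for a configuration `x` on the staircase `S = {(i,j) : i,j ≥ 1, i+j ≤ n+1}`
(encoded 0-based: cells `(a,b)` with `a+b+2 ≤ n+1`, extended by `0` off the staircase),
`π(x) = ∏_{i+j<n+1} (1 - v_i v_{n-j+1}) (v_i v_{n-j+1})^(x_{ij} - max(x_{i+1,j}, x_{i,j+1}))
        · ∏_{i=1}^n (1 - v_i²) v_i^(2 x_{i,n-i+1})`. -/
noncomputable def lppPMF (n : ℕ) (v : ℕ → ℝ) (x : ℕ → ℕ → ℕ) : ℝ :=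
  (∏ p ∈ (Finset.range n ×ˢ Finset.range n).filter (fun p => p.1 + p.2 + 2 ≤ n),
      (1 - v p.1 * v (n - 1 - p.2)) *
        (v p.1 * v (n - 1 - p.2)) ^ (x p.1 p.2 - max (x (p.1 + 1) p.2) (x p.1 (p.2 + 1)))) *
    ∏ i ∈ Finset.range n, (1 - v i ^ 2) * v i ^ (2 * x i (n - 1 - i))

open Finset

theorem hasSum_pi_prod_of_nonneg {ι β : Type*} [Fintype ι] {f : ι → β → ℝ} {s : ι → ℝ}
    (hf : ∀ i b, 0 ≤ f i b) (hs : ∀ i, HasSum (f i) (s i)) :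
    HasSum (fun g : ι → β => ∏ i, f i (g i)) (∏ i, s i) := by
  have key := Fintype.induction_empty_option (P := fun ι [Fintype ι] => ∀ (f : ι → β → ℝ)
    (s : ι → ℝ), (∀ i b, 0 ≤ f i b) → (∀ i, HasSum (f i) (s i)) →
    HasSum (fun g : ι → β => ∏ i, f i (g i)) (∏ i, s i)) ?of_equiv ?empty ?option ι
  case of_equiv =>
    intro α γ _ e ih f s hf hs
    -- `ih` is stated for the `Fintype α` instance transported along `e`
    let _ := Fintype.ofEquiv γ e.symm
    refine (e.arrowCongr (Equiv.refl β)).hasSum_iff.mp ?_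
    convert ih _ _ (fun a => hf (e a)) (fun a => hs (e a)) using 1
    · funext g
      exact (Fintype.prod_equiv e _ _ fun a => by simp).symm
    · exact (Fintype.prod_equiv e _ _ fun a => rfl).symm
  case empty =>
    intro f s _ _
    simp
  case option =>
    intro α _ ih f s hf hs
    have hrest := ih _ _ (fun a => hf (some a)) (fun a => hs (some a))
    have hsum := (hs none).mul hrest <| (hs none).summable.mul_of_nonneg hrest.summable
      (hf none) fun g => prod_nonneg fun a _ => hf (some a) (g a)
    refine Equiv.piOptionEquivProd.symm.hasSum_iff.mp ?_
    simpa [Function.comp_def, Fintype.prod_option, Equiv.piOptionEquivProd] using hsum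
  exact key f s hf hs

theorem hasSum_one_sub_mul_geometric {q : ℝ} (h0 : 0 ≤ q) (h1 : q < 1) :
    HasSum (fun k : ℕ => (1 - q) * q ^ k) 1 := by
  simpa [mul_inv_cancel₀ (sub_ne_zero.2 h1.ne')] using
    (hasSum_geometric_of_lt_one h0 h1).mul_left (1 - q)

def staircase (n : ℕ) : Finset (ℕ × ℕ) :=
  (range n ×ˢ range n).filter fun p => p.1 + p.2 < n

theorem mem_staircase {n : ℕ} {p : ℕ × ℕ} : p ∈ staircase n ↔ p.1 + p.2 < n := by
  simp only [staircase, mem_filter, mem_product, mem_range]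
  omega

def IsStaircaseConfig (n : ℕ) (x : ℕ → ℕ → ℕ) : Prop :=
  (∀ i j, i + j + 2 ≤ n → x (i + 1) j ≤ x i j ∧ x i (j + 1) ≤ x i j) ∧
    (∀ i j, ¬ i + j + 2 ≤ n + 1 → x i j = 0)

def increment (x : ℕ → ℕ → ℕ) (a b : ℕ) : ℕ :=
  x a b - max (x (a + 1) b) (x a (b + 1))

def lastPassage {n : ℕ} (g : staircase n → ℕ) (a b : ℕ) : ℕ :=
  if h : a + b < n then
    g ⟨(a, b), mem_staircase.2 h⟩ + max (lastPassage g (a + 1) b) (lastPassage g a (b + 1))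
  else 0
termination_by n - (a + b)

variable {n : ℕ}

theorem lastPassage_of_lt (g : staircase n → ℕ) {a b : ℕ} (h : a + b < n) :
    lastPassage g a b =
      g ⟨(a, b), mem_staircase.2 h⟩ + max (lastPassage g (a + 1) b) (lastPassage g a (b + 1)) := by
  rw [lastPassage, dif_pos h]

theorem lastPassage_of_not_lt (g : staircase n → ℕ) {a b : ℕ} (h : ¬ a + b < n) :
    lastPassage g a b = 0 := by
  rw [lastPassage, dif_neg h]

theorem increment_lastPassage (g : staircase n → ℕ) {a b : ℕ} (h : (a, b) ∈ staircase n) :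
    increment (lastPassage g) a b = g ⟨(a, b), h⟩ := by
  rw [increment, lastPassage_of_lt g (mem_staircase.1 h), Nat.add_sub_cancel]

theorem isStaircaseConfig_lastPassage (g : staircase n → ℕ) :
    IsStaircaseConfig n (lastPassage g) := by
  refine ⟨fun i j hij => ?_, fun i j hij => lastPassage_of_not_lt g (by omega)⟩
  rw [lastPassage_of_lt g (by omega : i + j < n)]
  omega

theorem lastPassage_increment {x : ℕ → ℕ → ℕ} (hx : IsStaircaseConfig n x) (a b : ℕ) :
    lastPassage (fun p : staircase n => increment x p.1.1 p.1.2) a b = x a b := by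
  induction a, b using lastPassage.induct with
  | case1 a b h ih1 ih2 =>
    rw [lastPassage_of_lt _ h, ih1, ih2]
    dsimp only [increment]
    have : max (x (a + 1) b) (x a (b + 1)) ≤ x a b := by
      by_cases h' : a + b + 2 ≤ n
      · exact max_le (hx.1 a b h').1 (hx.1 a b h').2
      · simp [hx.2 (a + 1) b (by omega), hx.2 a (b + 1) (by omega)]
    omega
  | case2 a b h => rw [lastPassage_of_not_lt _ h, hx.2 a b (by omega)]

variable (n) in
def staircaseEquiv : (staircase n → ℕ) ≃ {x // IsStaircaseConfig n x} where
  toFun g := ⟨lastPassage g, isStaircaseConfig_lastPassage g⟩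
  invFun x p := increment x.1 p.1.1 p.1.2
  left_inv g := funext fun p => increment_lastPassage g p.2
  right_inv x := Subtype.ext <| funext₂ <| lastPassage_increment x.2

theorem lppPMF_eq_prod_staircase (v : ℕ → ℝ) {x : ℕ → ℕ → ℕ}
    (hx : ∀ i j, ¬ i + j + 2 ≤ n + 1 → x i j = 0) :
    lppPMF n v x = ∏ p ∈ staircase n,
      (1 - v p.1 * v (n - 1 - p.2)) * (v p.1 * v (n - 1 - p.2)) ^ increment x p.1 p.2 := by
  rw [lppPMF, ← prod_filter_mul_prod_filter_not (staircase n) fun p => p.1 + p.2 + 2 ≤ n]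
  congr 1
  · congr 1
    ext p
    simp only [staircase, mem_filter, mem_product, mem_range]
    omega
  · refine prod_nbij' (fun i => (i, n - 1 - i)) Prod.fst ?_ ?_ ?_ ?_ ?_ <;>
      simp only [mem_filter, mem_staircase, mem_range, Prod.forall, Prod.mk.injEq, true_and,
        implies_true]
    · omega
    · omega
    · omega
    · intro i hi
      rw [increment, hx (i + 1) _ (by omega), hx i (_ + 1) (by omega), max_self, Nat.sub_zero,
        Nat.sub_sub_self (by omega : i ≤ n - 1), pow_mul, sq]

theorem mul_mem_Ioo_of_mem_staircase {v : ℕ → ℝ} (hv : ∀ i < n, 0 < v i ∧ v i < 1)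
    {p : ℕ × ℕ} (hp : p ∈ staircase n) : v p.1 * v (n - 1 - p.2) ∈ Set.Ioo 0 1 := by
  have h1 := hv p.1 (by have := mem_staircase.1 hp; omega)
  have h2 := hv (n - 1 - p.2) (by have := mem_staircase.1 hp; omega)
  exact ⟨mul_pos h1.1 h2.1, mul_lt_one_of_nonneg_of_lt_one_left h1.1.le h1.2 h2.2.le⟩

theorem lppPMF_lastPassage (v : ℕ → ℝ) (g : staircase n → ℕ) :
    lppPMF n v (lastPassage g) =
      ∏ p : staircase n,
        (1 - v p.1.1 * v (n - 1 - p.1.2)) * (v p.1.1 * v (n - 1 - p.1.2)) ^ g p := by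
  rw [lppPMF_eq_prod_staircase v (isStaircaseConfig_lastPassage g).2, ← prod_coe_sort]
  exact prod_congr rfl fun p _ => by rw [increment_lastPassage g p.2]

/-- For `0 < v_1, ..., v_n < 1`, `π` is a probability mass function on the set `𝒳` of
staircase configurations `x` with `x_{i+1,j} ≤ x_{ij}` and `x_{i,j+1} ≤ x_{ij}`:
it is strictly positive on `𝒳` and sums to `1` over `𝒳`. -/
theorem stmt19 (n : ℕ) (v : ℕ → ℝ) (hv : ∀ i < n, 0 < v i ∧ v i < 1) :
    (∀ x : ℕ → ℕ → ℕ,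
        (∀ i j, i + j + 2 ≤ n → x (i + 1) j ≤ x i j ∧ x i (j + 1) ≤ x i j) →
        (∀ i j, ¬ i + j + 2 ≤ n + 1 → x i j = 0) →
        0 < lppPMF n v x) ∧
    (∑' x : {x : ℕ → ℕ → ℕ //
        (∀ i j, i + j + 2 ≤ n → x (i + 1) j ≤ x i j ∧ x i (j + 1) ≤ x i j) ∧
        (∀ i j, ¬ i + j + 2 ≤ n + 1 → x i j = 0)},
      lppPMF n v x.1) = 1 := by
  have hq (p : staircase n) := mul_mem_Ioo_of_mem_staircase hv p.2
  refine ⟨fun x _ hx => ?_, ?_⟩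
  · rw [lppPMF_eq_prod_staircase v hx]
    exact prod_pos fun p hp => mul_pos (sub_pos.2 (hq ⟨p, hp⟩).2) (pow_pos (hq ⟨p, hp⟩).1 _)
  · have hsum : HasSum (fun g : staircase n → ℕ => lppPMF n v (lastPassage g)) 1 := by
      simp only [lppPMF_lastPassage]
      simpa using hasSum_pi_prod_of_nonneg
        (fun p k => mul_nonneg (sub_nonneg.2 (hq p).2.le) (pow_nonneg (hq p).1.le k))
        (fun p => hasSum_one_sub_mul_geometric (hq p).1.le (hq p).2)
    change ∑' x : {x // IsStaircaseConfig n x}, lppPMF n v x.1 = 1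
    rw [← (staircaseEquiv n).tsum_eq]
    exact hsum.tsum_eq
end
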